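/- Let H, P be nonzero integers, A = πH/P, let B ∈ ℝ with B/π ∈ ℚ, let r ∈ ℤ, let k ∈ ℤ, and let q : ℂ → ℂ be entire with q(z + m_q) = q(z) for all z ∈ ℂ, where m_q is a positive integer. Set z_st(m) = −(2πm + B)/(2A) for m ∈ ℤ and h(z) = q(z)/sin^k(πz) (analytic on ℂ ∖ ℤ). For m ∈ ℤ with z_st(m) ∉ ℤ and j ∈ ℕ define G_j(m) = exp(−i r A z_st(m)²) · h^{(j)}(z_st(m)). Then there exists a positive integer M, independent of j, such that for all m ∈ ℤ: z_st(m + M) − z_st(m) ∈ ℤ (hence z_st(m + M) ∈ ℤ if and only if z_st(m) ∈ ℤ), and G_j(m + M) = G_j(m) for every j ∈ ℕ and every m with z_st(m) ∉ ℤ. -/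

import Mathlib

/-- The stationary point `z_st(m) = −(2πm + B)/(2A)`. -/
noncomputable def zst (A B : ℝ) (m : ℤ) : ℝ :=
  -(2 * Real.pi * (m : ℝ) + B) / (2 * A)

/-- `G_j(m) = exp(−irA z_st(m)²) · h^{(j)}(z_st(m))` where `h(z) = q(z)/sin^k(πz)`. -/
noncomputable def Gperiodic (A B : ℝ) (r k : ℤ) (q : ℂ → ℂ) (j : ℕ) (m : ℤ) : ℂ :=
  Complex.exp (-Complex.I * (r : ℂ) * (A : ℂ) * ((zst A B m : ℝ) : ℂ) ^ 2) *
    iteratedDeriv j (fun z : ℂ => q z / Complex.sin ((Real.pi : ℂ) * z) ^ k)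
      ((zst A B m : ℝ) : ℂ)

lemma periodic_deriv' (f : ℂ → ℂ) (c : ℂ) (h : Function.Periodic f c) :
    Function.Periodic (deriv f) c := by
  intro x
  have h1 : (fun z => f (z + c)) = f := funext h
  rw [← deriv_comp_add_const, h1]

/-- If `A = πH/P` with `H, P` nonzero integers, `B/π ∈ ℚ`, `r, k ∈ ℤ`, and `q` is entire
and periodic with integer period `m_q > 0`, then there is a positive integer `M`,
independent of `j`, such that `z_st(m + M) − z_st(m) ∈ ℤ` (hence `z_st(m+M) ∈ ℤ` iff
`z_st(m) ∈ ℤ`) and `G_j(m + M) = G_j(m)` for all `j ∈ ℕ` and all `m` with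
`z_st(m) ∉ ℤ`. -/
theorem Gperiodic_is_periodic
    (H P : ℤ) (hH : H ≠ 0) (hP : P ≠ 0)
    (A : ℝ) (hA : A = Real.pi * (H : ℝ) / (P : ℝ))
    (B : ℝ) (hB : ∃ s : ℚ, B = (s : ℝ) * Real.pi)
    (r k : ℤ) (q : ℂ → ℂ) (hq : Differentiable ℂ q)
    (mq : ℕ) (hmq : 0 < mq) (hq_per : ∀ z : ℂ, q (z + (mq : ℂ)) = q z) :
    ∃ M : ℕ, 0 < M ∧ ∀ m : ℤ,
      (∃ j : ℤ, zst A B (m + (M : ℤ)) - zst A B m = (j : ℝ)) ∧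
      ((∃ l : ℤ, zst A B (m + (M : ℤ)) = (l : ℝ)) ↔ (∃ l : ℤ, zst A B m = (l : ℝ))) ∧
      ∀ j : ℕ, (¬ ∃ l : ℤ, zst A B m = (l : ℝ)) →
        Gperiodic A B r k q j (m + (M : ℤ)) = Gperiodic A B r k q j m := by
  obtain ⟨s, hBs⟩ := hB
  set M : ℕ := 2 * mq * H.natAbs * s.den with hM
  set D : ℤ := -(2 * (mq : ℤ) * s.den * P * H.sign) with hD
  set D2 : ℤ := -((mq : ℤ) * s.den * P * H.sign) with hD2
  set Dq : ℤ := -(2 * (s.den : ℤ) * P * H.sign) with hDq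
  have hHr : (H : ℝ) ≠ 0 := Int.cast_ne_zero.mpr hH
  have hPr : (P : ℝ) ≠ 0 := Int.cast_ne_zero.mpr hP
  have hπ : Real.pi ≠ 0 := Real.pi_ne_zero
  have hA0 : A ≠ 0 := by
    rw [hA]; exact div_ne_zero (mul_ne_zero hπ hHr) hPr
  have hσ : H.sign * H = (H.natAbs : ℤ) := by
    rcases lt_trichotomy H 0 with h | h | h
    · rw [Int.sign_eq_neg_one_iff_neg.mpr h]; omega
    · exact absurd h hH
    · rw [Int.sign_eq_one_iff_pos.mpr h]; omega
  -- key integer identity:  M * P = -D * H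
  have hMP : (M : ℤ) * P = -D * H := by
    have : -D * H = 2 * (mq : ℤ) * s.den * P * (H.sign * H) := by rw [hD]; ring
    rw [this, hσ, hM]; push_cast; ring
  have hMPr : (M : ℝ) * P = -(D : ℝ) * H := by exact_mod_cast hMP
  have hDD2 : D = 2 * D2 := by rw [hD, hD2]; ring
  have hDDq : D = (mq : ℤ) * Dq := by rw [hD, hDq]; ring
  -- zst shift
  have hzshift : ∀ m : ℤ, zst A B (m + (M : ℤ)) = zst A B m + (D : ℝ) := by
    intro m
    have h1 : zst A B (m + (M : ℤ)) - zst A B m = -(Real.pi * M) / A := by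
      rw [zst, zst]
      field_simp
      push_cast
      ring
    have h2 : -(Real.pi * M) / A = (D : ℝ) := by
      rw [hA]
      field_simp
      linear_combination -hMPr
    linarith [h1, h2 ▸ h1]
  -- A*D = -π*M  and  2*A*zst = -(2πm+B)
  have hAD : A * (D : ℝ) = -(Real.pi * M) := by
    rw [hA]
    field_simp
    linear_combination hMPr
  have h2Az : ∀ m : ℤ, 2 * A * zst A B m = -(2 * Real.pi * m + B) := by
    intro m; rw [zst]; field_simp
  -- rational identity for the exponent:  r * D * s  =  2 * N2
  set N2 : ℤ := -(r * mq * P * H.sign * s.num) with hN2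
  have hden : (s.den : ℚ) ≠ 0 := by exact_mod_cast s.den_nz
  have hQ : (r : ℚ) * (D : ℚ) * (s : ℚ) = 2 * (N2 : ℚ) := by
    have hs : (s.den : ℚ) * s = s.num := by
      rw [mul_comm, Rat.mul_den_eq_num]
    rw [hD, hN2]
    push_cast
    linear_combination (-(2:ℚ) * r * mq * P * H.sign) * hs
  have hRr : (r : ℝ) * (D : ℝ) * (s : ℝ) = 2 * (N2 : ℝ) := by exact_mod_cast hQ
  refine ⟨M, by positivity, fun m => ?_⟩
  refine ⟨⟨D, by rw [hzshift]; ring⟩, ?_, ?_⟩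
  · constructor
    · rintro ⟨l, hl⟩
      exact ⟨l - D, by push_cast; rw [← hl, hzshift]; ring⟩
    · rintro ⟨l, hl⟩
      exact ⟨l + D, by push_cast; rw [hzshift, hl]⟩
  · intro j _
    -- periodicity of h and its derivatives
    have hperh : Function.Periodic
        (fun z : ℂ => q z / Complex.sin ((Real.pi : ℂ) * z) ^ k) ((D : ℤ) : ℂ) := by
      intro z
      have hqD : q (z + ((D : ℤ) : ℂ)) = q z := by
        have hper : Function.Periodic q ((mq : ℕ) : ℂ) := hq_per
        have := hper.int_mul Dq z
        have hcast : ((D : ℤ) : ℂ) = (Dq : ℂ) * ((mq : ℕ) : ℂ) := by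
          rw [hDDq]; push_cast; ring
        rw [hcast]; exact this
      have hsinD : Complex.sin ((Real.pi : ℂ) * (z + ((D : ℤ) : ℂ)))
          = Complex.sin ((Real.pi : ℂ) * z) := by
        have hper := Complex.sin_periodic.int_mul D2
        have harg : (Real.pi : ℂ) * (z + ((D : ℤ) : ℂ))
            = (Real.pi : ℂ) * z + (D2 : ℂ) * (2 * (Real.pi : ℂ)) := by
          rw [show ((D : ℤ) : ℂ) = 2 * (D2 : ℂ) from by exact_mod_cast hDD2]
          ring
        rw [harg]; exact hper _
      simp only [hqD, hsinD]
    have hiter : Function.Periodic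
        (iteratedDeriv j (fun z : ℂ => q z / Complex.sin ((Real.pi : ℂ) * z) ^ k))
        ((D : ℤ) : ℂ) := by
      induction j with
      | zero => simpa [iteratedDeriv_zero] using hperh
      | succ n ih => rw [iteratedDeriv_succ]; exact periodic_deriv' _ _ ih
    -- now prove the equality
    rw [Gperiodic, Gperiodic]
    have hx : ((zst A B (m + (M : ℤ)) : ℝ) : ℂ)
        = ((zst A B m : ℝ) : ℂ) + ((D : ℤ) : ℂ) := by
      rw [hzshift]; push_cast; ring
    rw [hx]
    congr 1
    · -- exponential part
      set x : ℂ := ((zst A B m : ℝ) : ℂ) with hxdef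
      set K : ℤ := r * D2 * (2 * m + (M : ℤ)) + N2 with hK
      have c1 : 2 * (A : ℂ) * x = -(2 * (Real.pi : ℂ) * (m : ℂ) + (B : ℂ)) := by
        rw [hxdef]
        exact_mod_cast congrArg (Complex.ofReal) (h2Az m)
      have c2 : (A : ℂ) * ((D : ℤ) : ℂ) = -((Real.pi : ℂ) * (M : ℂ)) := by
        exact_mod_cast congrArg (Complex.ofReal) hAD
      have c3 : (B : ℂ) = (s : ℂ) * (Real.pi : ℂ) := by exact_mod_cast congrArg Complex.ofReal hBs
      have c4 : (r : ℂ) * ((D : ℤ) : ℂ) * (s : ℂ) = 2 * ((N2 : ℤ) : ℂ) := by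
        exact_mod_cast congrArg (Complex.ofReal) hRr
      have c5 : ((D : ℤ) : ℂ) = 2 * ((D2 : ℤ) : ℂ) := by exact_mod_cast hDD2
      have hE : -Complex.I * (r : ℂ) * (A : ℂ) * (x + ((D : ℤ) : ℂ)) ^ 2
          = -Complex.I * (r : ℂ) * (A : ℂ) * x ^ 2 + (K : ℂ) * (2 * (Real.pi : ℂ) * Complex.I) := by
        have hKc : ((K : ℤ) : ℂ) = (r : ℂ) * ((D2 : ℤ) : ℂ) * (2 * (m : ℂ) + (M : ℂ)) + ((N2 : ℤ) : ℂ) := by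
          rw [hK]; push_cast; ring
        linear_combination (-Complex.I * (r : ℂ) * ((D : ℤ) : ℂ)) * c1
          + (-Complex.I * (r : ℂ) * ((D : ℤ) : ℂ)) * c2
          + (Complex.I * (r : ℂ) * ((D : ℤ) : ℂ)) * c3
          + ((Real.pi : ℂ) * Complex.I) * c4
          + (Complex.I * (r : ℂ) * (Real.pi : ℂ) * (2 * (m : ℂ) + (M : ℂ))) * c5
          + (-2 * (Real.pi : ℂ) * Complex.I) * hKc
      rw [hE, Complex.exp_add, Complex.exp_int_mul_two_pi_mul_I, mul_one]
    · exact hiter _
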